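/- arXiv:2311.08632 — 2 statements merged into one kernel-verified Lean document; each statement's English description precedes it below -/
import Mathlib

section
/- Let α be a Perron number of degree r with conjugates α1 = α, ..., αr. If κ, η ∈ N^{r-1} satisfy s_κ = s_η, then the vector (−|κ|+|η|, κ2−η2, ..., κr−ηr) lies in R_α ∩ H_0, i.e., α1^{-|κ|+|η|} · ∏_{i=2}^r αi^{κi−ηi} = 1. -/
/-- `α` together with `b` forms the system of conjugates of a Perron number of degree `n+1`:
`α` is a real algebraic integer, `1 < α`, all other conjugates `b i` have modulus `< α`. -/
def IsPerronSystem (n : ℕ) (α : ℝ) (b : Fin n → ℂ) : Prop :=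
  1 < α ∧ (∀ i, ‖b i‖ < α) ∧
  ∃ p : Polynomial ℤ, p.Monic ∧ Irreducible p ∧ p.natDegree = n + 1 ∧
    (p.map (Int.castRingHom ℂ)).roots = (α : ℂ) ::ₘ Multiset.map b Finset.univ.val

/-- The candidate pole `s_κ` associated to a multi-index `κ`. -/
noncomputable def sPole {n : ℕ} (α : ℝ) (b : Fin n → ℂ) (κ : Fin n → ℕ) : ℂ :=
  -(∑ i, (κ i : ℂ)) +
    ((Real.log ‖∏ i, b i ^ κ i‖ / Real.log α : ℝ) : ℂ) +
    Complex.I * (((∏ i, b i ^ κ i).arg / Real.log α : ℝ) : ℂ)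

/-!
Since `Log z = log ‖z‖ + i arg z`, the pole is `s_κ = -|κ| + Log P_κ / log α` with
`P_κ = ∏ αᵢ ^ κᵢ`, so `s_κ = s_η` says `Log P_κ = (|κ| - |η|) log α + Log P_η`; exponentiating
gives the relation. This needs `P_κ, P_η ≠ 0`: the conjugates are nonzero because the minimal
polynomial of `α` is irreducible of degree at least `2`.
-/

open Polynomial Finset

lemma ne_zero_of_mem_roots_map_of_irreducible {p : ℤ[X]} (hp : Irreducible p)
    (hdeg : p.natDegree ≠ 1) {z : ℂ} (hz : z ∈ (p.map (Int.castRingHom ℂ)).roots) : z ≠ 0 := by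
  rintro rfl
  refine hp.aeval_ne_zero_of_natDegree_ne_one hdeg (x := (0 : ℂ)) ⟨0, map_zero _⟩ ?_
  rw [aeval_def, ← eval_map, Subsingleton.elim (algebraMap ℤ ℂ) (Int.castRingHom ℂ)]
  exact isRoot_of_mem_roots hz

lemma IsPerronSystem.ne_zero {n : ℕ} {α : ℝ} {b : Fin n → ℂ} (h : IsPerronSystem n α b)
    (i : Fin n) : b i ≠ 0 := by
  obtain ⟨-, -, p, -, hirr, hdeg, hroots⟩ := h
  refine ne_zero_of_mem_roots_map_of_irreducible hirr (by have := i.pos; omega) ?_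
  rw [hroots]
  exact Multiset.mem_cons_of_mem (Multiset.mem_map_of_mem b (mem_univ i))

lemma sPole_eq_neg_add_log_div {n : ℕ} (α : ℝ) (b : Fin n → ℂ) (κ : Fin n → ℕ) :
    sPole α b κ = -((∑ i, (κ i : ℤ) : ℤ) : ℂ) + Complex.log (∏ i, b i ^ κ i) / Real.log α := by
  apply Complex.ext <;>
    simp [sPole, Complex.log_re, Complex.log_im, Complex.div_re, Complex.div_im]

lemma Finset.prod_zpow_natCast_sub {ι G₀ : Type*} [CommGroupWithZero G₀] (s : Finset ι)
    {x : ι → G₀} (hx : ∀ i ∈ s, x i ≠ 0) (k m : ι → ℕ) :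
    ∏ i ∈ s, x i ^ ((k i : ℤ) - m i) = (∏ i ∈ s, x i ^ k i) / ∏ i ∈ s, x i ^ m i := by
  rw [← prod_div_distrib]
  exact prod_congr rfl fun i hi => by rw [zpow_sub₀ (hx i hi), zpow_natCast, zpow_natCast]

lemma zpow_mul_div_eq_one_of_neg_add_log_div_eq {α : ℝ} (hα : 0 < α) (hα1 : α ≠ 1)
    {z w : ℂ} (hz : z ≠ 0) (hw : w ≠ 0) {k m : ℤ}
    (h : -(k : ℂ) + Complex.log z / Real.log α = -(m : ℂ) + Complex.log w / Real.log α) :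
    (α : ℂ) ^ (-k + m) * (z / w) = 1 := by
  have hL : (Real.log α : ℂ) ≠ 0 :=
    Complex.ofReal_ne_zero.2 (Real.log_ne_zero_of_pos_of_ne_one hα hα1)
  have hlog : Complex.log z = ((k - m : ℤ) : ℂ) * Real.log α + Complex.log w := by
    field_simp at h
    push_cast
    linear_combination h
  have hzw : z = (α : ℂ) ^ (k - m) * w := by
    rw [← Complex.exp_log hz, hlog, Complex.exp_add, Complex.exp_int_mul, ← Complex.ofReal_exp,
      Real.exp_log hα, Complex.exp_log hw]
  rw [hzw, mul_div_cancel_right₀ _ hw, ← zpow_add₀ (Complex.ofReal_ne_zero.2 hα.ne'),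
    show -k + m + (k - m) = 0 by ring, zpow_zero]

/-- If `s_κ = s_η`, then the vector `(−|κ|+|η|, κ−η)` lies in `R_α ∩ H_0`, i.e.
`α^(−|κ|+|η|) · ∏ αi^(κi−ηi) = 1`. -/
theorem relation_of_sPole_eq (n : ℕ) (α : ℝ) (b : Fin n → ℂ)
    (h : IsPerronSystem n α b) (κ η : Fin n → ℕ)
    (heq : sPole α b κ = sPole α b η) :
    (α : ℂ) ^ (-(∑ i, (κ i : ℤ)) + ∑ i, (η i : ℤ)) *
      ∏ i, b i ^ ((κ i : ℤ) - (η i : ℤ)) = 1 := by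
  have hb : ∀ i ∈ univ, b i ≠ 0 := fun i _ => h.ne_zero i
  have hprod : ∀ ν : Fin n → ℕ, ∏ i, b i ^ ν i ≠ 0 := fun ν =>
    prod_ne_zero_iff.2 fun i hi => pow_ne_zero _ (hb i hi)
  rw [sPole_eq_neg_add_log_div, sPole_eq_neg_add_log_div] at heq
  rw [prod_zpow_natCast_sub univ hb]
  exact zpow_mul_div_eq_one_of_neg_add_log_div_eq (zero_lt_one.trans h.1) h.1.ne'
    (hprod κ) (hprod η) heq
end

section
/- Let α be a Perron number of degree r and ι: N^{r-1} → C the pole enumeration map κ ↦ s_κ. Then the fibre of ι over 0 consists of exactly one element, namely the zero multi-index: #ι^{-1}({0}) = 1. -/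
/-!
Only the real part of `s_κ` matters: it equals `logb α ‖∏ bᵢ^κᵢ‖ - |κ|`. Since every other
conjugate is smaller than `α` in modulus, `‖∏ bᵢ^κᵢ‖ < α^|κ|` as soon as `κ ≠ 0`, so the real part
is negative and `s_κ ≠ 0`.
-/

namespace Finset

variable {ι R : Type*} [CommSemiring R] [PartialOrder R] [IsStrictOrderedRing R]
  {s : Finset ι} {f g : ι → R}

lemma prod_lt_prod_of_nonneg (hf : ∀ i ∈ s, 0 ≤ f i) (hg : ∀ i ∈ s, 0 < g i)
    (hfg : ∀ i ∈ s, f i ≤ g i) (hlt : ∃ i ∈ s, f i < g i) :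
    ∏ i ∈ s, f i < ∏ i ∈ s, g i := by
  classical
  obtain ⟨i, hi, hilt⟩ := hlt
  rw [← insert_erase hi, prod_insert (notMem_erase _ _), prod_insert (notMem_erase _ _),
    mul_comm (f i), mul_comm (g i)]
  refine mul_lt_mul' ?_ hilt (hf i hi) (prod_pos fun j hj => hg j (mem_of_mem_erase hj))
  exact prod_le_prod (fun j hj => hf j (mem_of_mem_erase hj))
    (fun j hj => hfg j (mem_of_mem_erase hj))

lemma prod_pow_lt_pow_sum {a : R} {κ : ι → ℕ} (hf : ∀ i ∈ s, 0 ≤ f i)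
    (hfa : ∀ i ∈ s, f i < a) (hκ : ∃ i ∈ s, κ i ≠ 0) :
    ∏ i ∈ s, f i ^ κ i < a ^ ∑ i ∈ s, κ i := by
  rw [← prod_pow_eq_pow_sum]
  obtain ⟨i₀, hi₀, hκi₀⟩ := hκ
  have ha : 0 < a := (hf i₀ hi₀).trans_lt (hfa i₀ hi₀)
  exact prod_lt_prod_of_nonneg (fun i hi => pow_nonneg (hf i hi) _) (fun _ _ => pow_pos ha _)
    (fun i hi => pow_le_pow_left₀ (hf i hi) (hfa i hi).le _)
    ⟨i₀, hi₀, pow_lt_pow_left₀ (hfa i₀ hi₀) (hf i₀ hi₀) hκi₀⟩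

end Finset

namespace Real

lemma logb_lt_of_lt_pow {b x : ℝ} {m : ℕ} (hb : 1 < b) (hx : 0 ≤ x) (hm : m ≠ 0)
    (h : x < b ^ m) : logb b x < m := by
  rcases hx.eq_or_lt with rfl | hx
  · rw [logb_zero]
    exact_mod_cast Nat.pos_of_ne_zero hm
  · rwa [logb_lt_iff_lt_rpow hb hx, rpow_natCast]

end Real

section sPole

variable {n : ℕ} {α : ℝ} {b : Fin n → ℂ}

@[simp]
lemma sPole_zero (α : ℝ) (b : Fin n → ℂ) : sPole α b 0 = 0 := by
  simp [sPole]

lemma re_sPole (κ : Fin n → ℕ) :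
    (sPole α b κ).re = Real.logb α ‖∏ i, b i ^ κ i‖ - (∑ i, κ i : ℕ) := by
  simp [sPole, Real.log_div_log, sub_eq_neg_add]

lemma re_sPole_neg (hα : 1 < α) (hb : ∀ i, ‖b i‖ < α) {κ : Fin n → ℕ} (hκ : κ ≠ 0) :
    (sPole α b κ).re < 0 := by
  obtain ⟨i, hi⟩ := Function.ne_iff.mp hκ
  have hprod : ‖∏ i, b i ^ κ i‖ < α ^ ∑ i, κ i := by
    simpa only [norm_prod, norm_pow] using Finset.prod_pow_lt_pow_sum
      (fun i _ => norm_nonneg (b i)) (fun i _ => hb i) ⟨i, Finset.mem_univ i, hi⟩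
  have hsum : ∑ i, κ i ≠ 0 := fun h0 => hi (Finset.sum_eq_zero_iff.mp h0 i (Finset.mem_univ i))
  rw [re_sPole, sub_neg]
  exact Real.logb_lt_of_lt_pow hα (norm_nonneg _) hsum hprod

end sPole

/-- The fibre of the pole enumeration map over `0` consists exactly of the zero
multi-index. -/
theorem fibre_at_zero (n : ℕ) (α : ℝ) (b : Fin n → ℂ)
    (h : IsPerronSystem n α b) :
    {κ : Fin n → ℕ | sPole α b κ = 0} = {0} := by
  obtain ⟨hα, hb, -⟩ := h
  ext κ
  refine ⟨fun (hκ : sPole α b κ = 0) => ?_, fun (hκ : κ = 0) => hκ ▸ sPole_zero α b⟩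
  by_contra hne
  simpa [hκ] using re_sPole_neg hα hb hne
end
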